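/- Let A ∈ ℝ^{d×d}, u_0 ∈ ℝ^d, and fix h > 0. Let (V(t))_{t≥0} be the stochastic Euler dynamics with stepsize parameter h for the linear ODE u' = Au, u(0) = u_0. Then there exists a constant C > 0 such that for all ε ∈ (0, 1): 𝔼[‖V(ε) − exp(εA)u_0‖²] ≤ C · ε⁴; i.e., the local root mean square truncation error satisfies 𝔼[‖V(ε) − u(ε)‖²]^{1/2} = O(ε²) as ε ↓ 0. -/

import Mathlib

open MeasureTheory ProbabilityTheory
open scoped NNReal

/-- The jump times `T_k = H_1 + ⋯ + H_k` (here `H i` stands for `H_{i+1}`). -/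
noncomputable def jumpTime {Ω : Type*} (H : ℕ → Ω → ℝ) (k : ℕ) (ω : Ω) : ℝ :=
  ∑ i ∈ Finset.range k, H i ω

/-- The counting process `K(t) = max {k : T_k ≤ t}`. -/
noncomputable def jumpCount {Ω : Type*} (H : ℕ → Ω → ℝ) (t : ℝ) (ω : Ω) : ℕ :=
  sSup {k | jumpTime H k ω ≤ t}

/-- The random timestep Euler chain `V̂_0 = u₀`, `V̂_k = V̂_{k−1} + H_k f(V̂_{k−1})`. -/
noncomputable def eulerChain {Ω E : Type*} [AddCommGroup E] [Module ℝ E]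
    (f : E → E) (u0 : E) (H : ℕ → Ω → ℝ) : ℕ → Ω → E
  | 0, _ => u0
  | (k + 1), ω => eulerChain f u0 H k ω + H k ω • f (eulerChain f u0 H k ω)

/-- The stochastic Euler dynamics path
`V(t) = V̂_{K(t)} + (t − T_{K(t)}) f(V̂_{K(t)})`. -/
noncomputable def eulerPath {Ω E : Type*} [AddCommGroup E] [Module ℝ E]
    (f : E → E) (u0 : E) (H : ℕ → Ω → ℝ) (t : ℝ) (ω : Ω) : E :=
  eulerChain f u0 H (jumpCount H t ω) ω +
    (t - jumpTime H (jumpCount H t ω) ω) • f (eulerChain f u0 H (jumpCount H t ω) ω)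

/-- The Euclidean norm of a vector in `ℝ^n`. -/
noncomputable def eucNorm {n : Type*} [Fintype n] (x : n → ℝ) : ℝ :=
  ‖(WithLp.equiv 2 (n → ℝ)).symm x‖

/-- The operator norm (w.r.t. Euclidean norms) of a real square matrix. -/
noncomputable def matOpNorm {n : Type*} [Fintype n] [DecidableEq n] (M : Matrix n n ℝ) : ℝ :=
  ‖Matrix.toEuclideanCLM (𝕜 := ℝ) M‖

section Auxiliary

open NormedSpace
open scoped Nat

section BanachEst
variable {𝒜 : Type*} [NormedRing 𝒜] [NormedAlgebra ℝ 𝒜] [CompleteSpace 𝒜]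

omit [CompleteSpace 𝒜] in
lemma myNormExpLe (h1 : ‖(1:𝒜)‖ ≤ 1) (x : 𝒜) : ‖exp x‖ ≤ Real.exp ‖x‖ := by
  have hterm : ∀ n : ℕ, ‖((n ! : ℝ)⁻¹) • x ^ n‖ ≤ (n ! : ℝ)⁻¹ * ‖x‖ ^ n := by
    intro n
    rw [norm_smul, norm_inv, Real.norm_natCast]
    gcongr
    cases n with
    | zero => simpa using h1
    | succ m => exact norm_pow_le' x (Nat.succ_pos m)
  calc ‖exp x‖ ≤ ∑' n : ℕ, ‖((n ! : ℝ)⁻¹) • x ^ n‖ := by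
        rw [exp_eq_tsum (𝕂 := ℝ)]
        exact norm_tsum_le_tsum_norm (norm_expSeries_summable' x)
    _ ≤ ∑' n : ℕ, (n ! : ℝ)⁻¹ * ‖x‖ ^ n := by
        refine Summable.tsum_le_tsum hterm (norm_expSeries_summable' x) ?_
        exact Real.summable_pow_div_factorial ‖x‖ |>.congr (by intro n; rw [div_eq_inv_mul])
    _ = Real.exp ‖x‖ := by
        rw [Real.exp_eq_exp_ℝ, exp_eq_tsum (𝕂 := ℝ)]
        simp [smul_eq_mul]

lemma myExpTaylor (h1 : ‖(1:𝒜)‖ ≤ 1) (x : 𝒜) :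
    ‖exp x - 1 - x‖ ≤ ‖x‖ ^ 2 * Real.exp ‖x‖ := by
  set f : ℕ → 𝒜 := fun n => ((n ! : ℝ)⁻¹) • x ^ n with hf
  have hs : Summable f := expSeries_summable' (𝕂 := ℝ) x
  have hs1 : Summable fun n => f (n + 1) := (summable_nat_add_iff 1).mpr hs
  have hns : Summable fun n => ‖f n‖ := norm_expSeries_summable' (𝕂 := ℝ) x
  have hns2 : Summable fun n => ‖f (n + 2)‖ := (summable_nat_add_iff 2).mpr hns
  have heq : exp x - 1 - x = ∑' n : ℕ, f (n + 2) := by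
    have h0 : exp x = ∑' n, f n := by rw [exp_eq_tsum (𝕂 := ℝ)]
    rw [h0, Summable.tsum_eq_zero_add hs, Summable.tsum_eq_zero_add hs1]
    have hf0 : f 0 = 1 := by simp [hf]
    have hf1 : f 1 = x := by simp [hf]
    rw [hf0, hf1]
    abel
  rw [heq]
  have hsum2 : Summable fun n : ℕ => ‖x‖ ^ 2 * ((n ! : ℝ)⁻¹ * ‖x‖ ^ n) := by
    apply Summable.mul_left
    exact (Real.summable_pow_div_factorial ‖x‖).congr (by intro n; rw [div_eq_inv_mul])
  calc ‖∑' n : ℕ, f (n + 2)‖ ≤ ∑' n : ℕ, ‖f (n + 2)‖ := norm_tsum_le_tsum_norm hns2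
    _ ≤ ∑' n : ℕ, ‖x‖ ^ 2 * ((n ! : ℝ)⁻¹ * ‖x‖ ^ n) := by
        refine Summable.tsum_le_tsum ?_ hns2 hsum2
        intro n
        have hpow : ‖x ^ (n + 2)‖ ≤ ‖x‖ ^ (n + 2) := norm_pow_le' x (Nat.succ_pos _)
        have hfac : (n ! : ℝ) ≤ ((n + 2)! : ℝ) := by
          exact_mod_cast Nat.factorial_le (by omega)
        calc ‖f (n + 2)‖ = ((n + 2)! : ℝ)⁻¹ * ‖x ^ (n + 2)‖ := by
              rw [hf]; simp [norm_smul, abs_of_nonneg (by positivity : (0:ℝ) ≤ (((n+2)! : ℝ))⁻¹)]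
          _ ≤ (n ! : ℝ)⁻¹ * ‖x‖ ^ (n + 2) := by
              gcongr
          _ = ‖x‖ ^ 2 * ((n ! : ℝ)⁻¹ * ‖x‖ ^ n) := by ring
    _ = ‖x‖ ^ 2 * Real.exp ‖x‖ := by
        rw [tsum_mul_left]
        congr 1
        rw [Real.exp_eq_exp_ℝ, exp_eq_tsum (𝕂 := ℝ)]
        simp [smul_eq_mul]

noncomputable def prodApprox (a : 𝒜) (δ : ℕ → ℝ) : ℕ → 𝒜
  | 0 => 1
  | n+1 => (1 + δ n • a) * prodApprox a δ n

lemma prodApprox_congr (a : 𝒜) {δ δ' : ℕ → ℝ} (n : ℕ)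
    (hd : ∀ i < n, δ i = δ' i) :
    prodApprox a δ n = prodApprox a δ' n := by
  induction n with
  | zero => rfl
  | succ m ih =>
      rw [prodApprox, prodApprox, hd m (Nat.lt_succ_self m),
        ih (fun i hi => hd i (hi.trans (Nat.lt_succ_self m)))]

lemma prodApprox_sub_exp (h1 : ‖(1:𝒜)‖ ≤ 1) (a : 𝒜) (δ : ℕ → ℝ) (n : ℕ)
    (hδ : ∀ i < n, 0 ≤ δ i) :
    ‖prodApprox a δ n - exp ((∑ i ∈ Finset.range n, δ i) • a)‖ ≤
      (∑ i ∈ Finset.range n, (δ i)^2) * ‖a‖^2 *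
        Real.exp ((∑ i ∈ Finset.range n, δ i) * ‖a‖) := by
  induction n with
  | zero => simp [prodApprox, exp_zero]
  | succ n ih =>
      have hδn : ∀ i < n, 0 ≤ δ i := fun i hi => hδ i (hi.trans (Nat.lt_succ_self n))
      have ih' := ih hδn
      set s := ∑ i ∈ Finset.range n, δ i with hs
      have hsnn : 0 ≤ s := Finset.sum_nonneg fun i hi => hδn i (Finset.mem_range.mp hi)
      have htnn : 0 ≤ δ n := hδ n (Nat.lt_succ_self n)
      have hsum : ∑ i ∈ Finset.range (n+1), δ i = s + δ n := Finset.sum_range_succ δ n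
      have hsq : ∑ i ∈ Finset.range (n+1), (δ i)^2
          = (∑ i ∈ Finset.range n, (δ i)^2) + (δ n)^2 := Finset.sum_range_succ _ n
      have hcomm : Commute (δ n • a) (s • a) :=
        ((Commute.refl a).smul_left (δ n)).smul_right s
      have hexp : exp ((s + δ n) • a) = (1 + δ n • a) * exp (s • a)
          + (exp (δ n • a) - 1 - δ n • a) * exp (s • a) := by
        rw [add_smul, add_comm (s • a), (letI : NormedAlgebra ℚ 𝒜 := .restrictScalars ℚ ℝ 𝒜; exp_add_of_commute hcomm)]
        noncomm_ring
      have hkey : prodApprox a δ (n+1) - exp ((s + δ n) • a)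
          = (1 + δ n • a) * (prodApprox a δ n - exp (s • a))
            - (exp (δ n • a) - 1 - δ n • a) * exp (s • a) := by
        rw [prodApprox, hexp]; noncomm_ring
      have hna : ‖δ n • a‖ = δ n * ‖a‖ := by
        rw [norm_smul, Real.norm_eq_abs, abs_of_nonneg htnn]
      have hnsa : ‖s • a‖ = s * ‖a‖ := by
        rw [norm_smul, Real.norm_eq_abs, abs_of_nonneg hsnn]
      have h1a : ‖(1:𝒜) + δ n • a‖ ≤ Real.exp (δ n * ‖a‖) := by
        calc ‖(1:𝒜) + δ n • a‖ ≤ ‖(1:𝒜)‖ + ‖δ n • a‖ := norm_add_le _ _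
          _ ≤ 1 + δ n * ‖a‖ := by rw [hna]; linarith
          _ ≤ Real.exp (δ n * ‖a‖) := by linarith [Real.add_one_le_exp (δ n * ‖a‖)]
      have htay : ‖exp (δ n • a) - 1 - δ n • a‖ ≤ (δ n)^2 * ‖a‖^2 * Real.exp (δ n * ‖a‖) := by
        calc ‖exp (δ n • a) - 1 - δ n • a‖ ≤ ‖δ n • a‖^2 * Real.exp ‖δ n • a‖ :=
              myExpTaylor h1 _
          _ = (δ n)^2 * ‖a‖^2 * Real.exp (δ n * ‖a‖) := by rw [hna]; ring
      have hEn : ‖exp (s • a)‖ ≤ Real.exp (s * ‖a‖) := by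
        calc ‖exp (s • a)‖ ≤ Real.exp ‖s • a‖ := myNormExpLe h1 _
          _ = Real.exp (s * ‖a‖) := by rw [hnsa]
      rw [hsum, hsq, hkey]
      calc ‖(1 + δ n • a) * (prodApprox a δ n - exp (s • a))
            - (exp (δ n • a) - 1 - δ n • a) * exp (s • a)‖
          ≤ ‖(1 + δ n • a) * (prodApprox a δ n - exp (s • a))‖
            + ‖(exp (δ n • a) - 1 - δ n • a) * exp (s • a)‖ := norm_sub_le _ _
        _ ≤ ‖(1:𝒜) + δ n • a‖ * ‖prodApprox a δ n - exp (s • a)‖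
            + ‖exp (δ n • a) - 1 - δ n • a‖ * ‖exp (s • a)‖ := by
            gcongr <;> exact norm_mul_le _ _
        _ ≤ Real.exp (δ n * ‖a‖) * ((∑ i ∈ Finset.range n, (δ i)^2) * ‖a‖^2 * Real.exp (s * ‖a‖))
            + ((δ n)^2 * ‖a‖^2 * Real.exp (δ n * ‖a‖)) * Real.exp (s * ‖a‖) :=
            add_le_add (mul_le_mul h1a ih' (norm_nonneg _) (Real.exp_nonneg _))
              (mul_le_mul htay hEn (norm_nonneg _) (by positivity))
        _ = ((∑ i ∈ Finset.range n, (δ i)^2) + (δ n)^2) * ‖a‖^2 *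
              Real.exp ((s + δ n) * ‖a‖) := by
            rw [show (s + δ n) * ‖a‖ = s * ‖a‖ + δ n * ‖a‖ by ring, Real.exp_add]; ring

end BanachEst

lemma jumpTime_jumpCount_le {Ω : Type*} (H : ℕ → Ω → ℝ) (ω : Ω) {t : ℝ} (ht : 0 ≤ t) :
    jumpTime H (jumpCount H t ω) ω ≤ t := by
  have h0 : (0:ℕ) ∈ {k | jumpTime H k ω ≤ t} := by simp [jumpTime, ht]
  by_cases hb : BddAbove {k | jumpTime H k ω ≤ t}
  · exact Nat.sSup_mem ⟨0, h0⟩ hb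
  · rw [jumpCount, csSup_of_not_bddAbove hb, csSup_empty]
    simpa [jumpTime] using ht

lemma myEquivSymmAdd {n : Type*} (x y : n → ℝ) :
    (WithLp.equiv 2 (n → ℝ)).symm (x + y)
      = (WithLp.equiv 2 (n → ℝ)).symm x + (WithLp.equiv 2 (n → ℝ)).symm y := rfl

lemma myEquivSymmSub {n : Type*} (x y : n → ℝ) :
    (WithLp.equiv 2 (n → ℝ)).symm (x - y)
      = (WithLp.equiv 2 (n → ℝ)).symm x - (WithLp.equiv 2 (n → ℝ)).symm y := rfl

lemma myEquivSymmSmul {n : Type*} (c : ℝ) (x : n → ℝ) :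
    (WithLp.equiv 2 (n → ℝ)).symm (c • x) = c • (WithLp.equiv 2 (n → ℝ)).symm x := rfl

lemma myToEuclideanCLMEquivSymm {n : Type*} [Fintype n] [DecidableEq n]
    (A : Matrix n n ℝ) (x : n → ℝ) :
    Matrix.toEuclideanCLM (𝕜 := ℝ) A ((WithLp.equiv 2 (n → ℝ)).symm x)
      = (WithLp.equiv 2 (n → ℝ)).symm (Matrix.toLin' A x) := rfl

lemma eulerChain_eq {d : ℕ} {Ω : Type*} (A : Matrix (Fin d) (Fin d) ℝ) (u0 : Fin d → ℝ)
    (H : ℕ → Ω → ℝ) (ω : Ω) (k : ℕ) :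
    (WithLp.equiv 2 (Fin d → ℝ)).symm (eulerChain A.mulVec u0 H k ω)
      = prodApprox (Matrix.toEuclideanCLM (𝕜 := ℝ) A) (fun i => H i ω) k
          ((WithLp.equiv 2 (Fin d → ℝ)).symm u0) := by
  induction k with
  | zero => simp [eulerChain, prodApprox]
  | succ k ih =>
      rw [eulerChain, myEquivSymmAdd, myEquivSymmSmul, prodApprox]
      rw [← Matrix.toLin'_apply, ← myToEuclideanCLMEquivSymm, ih]
      simp [ContinuousLinearMap.mul_apply, ContinuousLinearMap.add_apply,
        ContinuousLinearMap.one_apply, ContinuousLinearMap.smul_apply]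

lemma euler_pointwise {d : ℕ} {Ω : Type*} (A : Matrix (Fin d) (Fin d) ℝ) (u0 : Fin d → ℝ)
    (H : ℕ → Ω → ℝ) (ω : Ω) (hω : ∀ k, 0 ≤ H k ω) {ε : ℝ} (hε : 0 < ε) (hε1 : ε ≤ 1) :
    eucNorm (eulerPath A.mulVec u0 H ε ω - (NormedSpace.exp (ε • A)).mulVec u0)
      ≤ ε^2 * (‖Matrix.toEuclideanCLM (𝕜 := ℝ) A‖^2 *
          Real.exp ‖Matrix.toEuclideanCLM (𝕜 := ℝ) A‖ *
          ‖(WithLp.equiv 2 (Fin d → ℝ)).symm u0‖) := by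
  classical
  set L := Matrix.toEuclideanCLM (𝕜 := ℝ) A with hL
  set x0 := (WithLp.equiv 2 (Fin d → ℝ)).symm u0 with hx0
  set K := jumpCount H ε ω with hK
  set T := jumpTime H K ω with hT
  have hTle : T ≤ ε := jumpTime_jumpCount_le H ω hε.le
  set δ : ℕ → ℝ := fun i => if i < K then H i ω else ε - T with hδ
  have hδnn : ∀ i < K + 1, 0 ≤ δ i := by
    intro i hi
    by_cases hik : i < K
    · simp only [hδ, if_pos hik]; exact hω i
    · simp only [hδ, if_neg hik]; linarith
  have hsum : ∑ i ∈ Finset.range (K+1), δ i = ε := by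
    rw [Finset.sum_range_succ]
    have hT' : ∑ i ∈ Finset.range K, δ i = T := by
      rw [hT, jumpTime]
      refine Finset.sum_congr rfl fun i hi => ?_
      simp only [hδ, if_pos (Finset.mem_range.mp hi)]
    rw [hT']
    simp only [hδ, if_neg (lt_irrefl K)]
    ring
  have hsq : ∑ i ∈ Finset.range (K+1), δ i ^ 2 ≤ ε ^ 2 := by
    calc ∑ i ∈ Finset.range (K+1), δ i ^ 2
        ≤ (∑ i ∈ Finset.range (K+1), δ i)^2 :=
          Finset.sum_sq_le_sq_sum_of_nonneg (fun i hi => hδnn i (Finset.mem_range.mp hi))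
      _ = ε ^ 2 := by rw [hsum]
  have h1 : ‖(1 : EuclideanSpace ℝ (Fin d) →L[ℝ] EuclideanSpace ℝ (Fin d))‖ ≤ 1 := by
    rw [ContinuousLinearMap.one_def]
    exact ContinuousLinearMap.norm_id_le
  have hδK : δ K = ε - T := by simp [hδ]
  have hcongr : prodApprox L (fun i => H i ω) K = prodApprox L δ K := by
    refine prodApprox_congr L K (fun i hi => ?_)
    simp [hδ, hi]
  have hchain : (WithLp.equiv 2 (Fin d → ℝ)).symm (eulerChain A.mulVec u0 H K ω)
      = prodApprox L δ K x0 := by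
    rw [hK, eulerChain_eq, ← hK, hcongr, hx0]
  have hpath : (WithLp.equiv 2 (Fin d → ℝ)).symm (eulerPath A.mulVec u0 H ε ω)
      = prodApprox L δ (K+1) x0 := by
    rw [eulerPath, myEquivSymmAdd, myEquivSymmSmul,
      ← Matrix.toLin'_apply, ← myToEuclideanCLMEquivSymm, ← hK, ← hT, ← hL,
      hchain, prodApprox]
    simp only [ContinuousLinearMap.mul_apply, ContinuousLinearMap.add_apply,
      ContinuousLinearMap.one_apply, ContinuousLinearMap.smul_apply, hδK]
  have hcont : Continuous (Matrix.toEuclideanCLM (𝕜 := ℝ) (n := Fin d)) := by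
    let lin : Matrix (Fin d) (Fin d) ℝ →ₗ[ℝ]
        (EuclideanSpace ℝ (Fin d) →L[ℝ] EuclideanSpace ℝ (Fin d)) :=
      { toFun := Matrix.toEuclideanCLM (𝕜 := ℝ),
        map_add' := fun x y => map_add _ x y,
        map_smul' := fun c x => map_smul _ c x }
    exact lin.continuous_of_finiteDimensional
  have hexpv : (WithLp.equiv 2 (Fin d → ℝ)).symm ((NormedSpace.exp (ε • A)).mulVec u0)
      = NormedSpace.exp (ε • L) x0 := by
    rw [← Matrix.toLin'_apply, ← myToEuclideanCLMEquivSymm, ← hx0]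
    congr 1
    have hmap : Matrix.toEuclideanCLM (𝕜 := ℝ) (NormedSpace.exp (ε • A))
        = NormedSpace.exp (Matrix.toEuclideanCLM (𝕜 := ℝ) (ε • A)) := by
      letI : SeminormedRing (Matrix (Fin d) (Fin d) ℝ) := Matrix.linftyOpSemiNormedRing
      letI : NormedRing (Matrix (Fin d) (Fin d) ℝ) := Matrix.linftyOpNormedRing
      letI : NormedAlgebra ℝ (Matrix (Fin d) (Fin d) ℝ) := Matrix.linftyOpNormedAlgebra
      letI : NormedAlgebra ℚ (Matrix (Fin d) (Fin d) ℝ) := .restrictScalars ℚ ℝ _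
      exact map_exp (Matrix.toEuclideanCLM (𝕜 := ℝ)) hcont (ε • A)
    rw [hmap, _root_.map_smul, hL]
  have hdiff := prodApprox_sub_exp h1 L δ (K+1) hδnn
  rw [hsum] at hdiff
  have hbound : ‖prodApprox L δ (K+1) - NormedSpace.exp (ε • L)‖
      ≤ ε^2 * ‖L‖^2 * Real.exp ‖L‖ := by
    calc ‖prodApprox L δ (K+1) - NormedSpace.exp (ε • L)‖
        ≤ (∑ i ∈ Finset.range (K+1), δ i ^ 2) * ‖L‖^2 * Real.exp (ε * ‖L‖) := hdiff
      _ ≤ ε^2 * ‖L‖^2 * Real.exp ‖L‖ := by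
          have hexple : Real.exp (ε * ‖L‖) ≤ Real.exp ‖L‖ :=
            Real.exp_le_exp.mpr (by nlinarith [norm_nonneg L])
          exact mul_le_mul (mul_le_mul_of_nonneg_right hsq (by positivity)) hexple
            (Real.exp_nonneg _) (by positivity)
  rw [eucNorm, myEquivSymmSub, hpath, hexpv]
  calc ‖prodApprox L δ (K+1) x0 - NormedSpace.exp (ε • L) x0‖
      = ‖(prodApprox L δ (K+1) - NormedSpace.exp (ε • L)) x0‖ := by
        rw [ContinuousLinearMap.sub_apply]
    _ ≤ ‖prodApprox L δ (K+1) - NormedSpace.exp (ε • L)‖ * ‖x0‖ :=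
        ContinuousLinearMap.le_opNorm _ _
    _ ≤ (ε^2 * ‖L‖^2 * Real.exp ‖L‖) * ‖x0‖ := by
        gcongr
    _ = ε^2 * (‖L‖^2 * Real.exp ‖L‖ * ‖x0‖) := by ring

end Auxiliary

/-- Local root mean square truncation error of the stochastic Euler dynamics for `u' = Au`:
there is `C > 0` with `𝔼[‖V(ε) − exp(εA)u₀‖²] ≤ C ε⁴` for all `ε ∈ (0,1)`. -/
theorem stmt11 {d : ℕ} {Ω : Type*} [MeasurableSpace Ω] (P : Measure Ω) [IsProbabilityMeasure P]
    (A : Matrix (Fin d) (Fin d) ℝ) (u0 : Fin d → ℝ) (h : ℝ) (hh : 0 < h)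
    (H : ℕ → Ω → ℝ) (hHmeas : ∀ k, Measurable (H k))
    (hHindep : iIndepFun H P)
    (hHdist : ∀ k, Measure.map (H k) P = expMeasure h⁻¹) :
    ∃ C > (0 : ℝ), ∀ ε : ℝ, 0 < ε → ε < 1 →
      ∫ ω, eucNorm (eulerPath A.mulVec u0 H ε ω - (NormedSpace.exp (ε • A)).mulVec u0) ^ 2 ∂P
        ≤ C * ε ^ 4 := by
  set b : ℝ := ‖Matrix.toEuclideanCLM (𝕜 := ℝ) A‖^2 *
      Real.exp ‖Matrix.toEuclideanCLM (𝕜 := ℝ) A‖ * ‖(WithLp.equiv 2 (Fin d → ℝ)).symm u0‖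
    with hb
  have hbnn : 0 ≤ b := by rw [hb]; positivity
  refine ⟨b^2 + 1, by positivity, ?_⟩
  intro ε hε hε1
  have hz : expMeasure h⁻¹ (Set.Iio 0) = 0 := by
    rw [expMeasure, gammaMeasure, withDensity_apply _ measurableSet_Iio]
    exact lintegral_gammaPDF_of_nonpos le_rfl
  have hae : ∀ᵐ ω ∂P, ∀ k, 0 ≤ H k ω := by
    rw [MeasureTheory.ae_all_iff]
    intro k
    rw [MeasureTheory.ae_iff]
    have hset : {ω | ¬ 0 ≤ H k ω} = H k ⁻¹' Set.Iio 0 := by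
      ext ω; simp [not_le]
    rw [hset, ← Measure.map_apply (hHmeas k) measurableSet_Iio, hHdist k]
    exact hz
  have hbd : ∀ᵐ ω ∂P,
      eucNorm (eulerPath A.mulVec u0 H ε ω - (NormedSpace.exp (ε • A)).mulVec u0) ^ 2
        ≤ (b^2 + 1) * ε^4 := by
    filter_upwards [hae] with ω hω
    have hpt := euler_pointwise A u0 H ω hω hε hε1.le
    have hnn : 0 ≤ eucNorm (eulerPath A.mulVec u0 H ε ω
        - (NormedSpace.exp (ε • A)).mulVec u0) := by
      rw [eucNorm]; exact norm_nonneg _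
    calc eucNorm (eulerPath A.mulVec u0 H ε ω - (NormedSpace.exp (ε • A)).mulVec u0) ^ 2
        ≤ (ε^2 * b)^2 := by
          refine pow_le_pow_left₀ hnn ?_ 2
          exact hpt.trans_eq (by rw [hb])
      _ = b^2 * ε^4 := by ring
      _ ≤ (b^2 + 1) * ε^4 := by nlinarith [pow_pos hε 4]
  calc ∫ ω, eucNorm (eulerPath A.mulVec u0 H ε ω
        - (NormedSpace.exp (ε • A)).mulVec u0) ^ 2 ∂P
      ≤ ∫ _ω, (b^2 + 1) * ε^4 ∂P :=
        integral_mono_of_nonneg (Filter.Eventually.of_forall fun ω => sq_nonneg _)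
          (integrable_const _) hbd
    _ = (b^2 + 1) * ε^4 := by simp
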